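/- arXiv:1803.08744 — 3 statements merged into one kernel-verified Lean document; each statement's English description precedes it below -/
import Mathlib

section
/- Let X and Y be metric spaces with X complete, and let f : X → Y be a continuous open surjection. Then there exists a subset Z ⊆ X such that f restricted to Z is surjective onto Y and the density character of Z equals the density character of Y. -/
noncomputable def densityCharacter (X : Type*) [TopologicalSpace X] : Cardinal :=
  sInf {c | ∃ s : Set X, Dense s ∧ Cardinal.mk s = c}

open Metric Set Cardinal

section aux

lemma densityCharacter_le_mk_of_dense {W : Type*} [TopologicalSpace W] {s : Set W}
    (hd : Dense s) : densityCharacter W ≤ #s :=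
  csInf_le' ⟨s, hd, rfl⟩

lemma exists_dense_mk_eq (W : Type*) [TopologicalSpace W] :
    ∃ s : Set W, Dense s ∧ #s = densityCharacter W := by
  have hne : {c | ∃ s : Set W, Dense s ∧ Cardinal.mk s = c}.Nonempty :=
    ⟨#(univ : Set W), univ, dense_univ, rfl⟩
  obtain ⟨s, hd, hm⟩ := csInf_mem hne
  exact ⟨s, hd, hm⟩

/-- If `f` is continuous and `f '' Z = univ` then `densityCharacter Y ≤ densityCharacter Z`. -/
lemma densityCharacter_target_le {X Y : Type u} [TopologicalSpace X] [TopologicalSpace Y]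
    {f : X → Y} (hf : Continuous f) {Z : Set X} (hZ : f '' Z = Set.univ) :
    densityCharacter Y ≤ densityCharacter Z := by
  obtain ⟨s, hsd, hsm⟩ := exists_dense_mk_eq Z
  have hdense : Dense (f '' (Subtype.val '' s)) := by
    intro y
    have hy : y ∈ f '' Z := by rw [hZ]; trivial
    obtain ⟨z, hzZ, rfl⟩ := hy
    have hcl : (⟨z, hzZ⟩ : Z) ∈ closure s := hsd _
    have hzcl : z ∈ closure (Subtype.val '' s) := by
      exact closure_subtype.mp hcl
    exact map_mem_closure hf hzcl (fun a ha => mem_image_of_mem f ha)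
  calc densityCharacter Y ≤ #(f '' (Subtype.val '' s)) :=
        densityCharacter_le_mk_of_dense hdense
    _ ≤ #(Subtype.val '' s) := Cardinal.mk_image_le
    _ ≤ #s := Cardinal.mk_image_le
    _ = densityCharacter Z := hsm

variable {X Y : Type u} [MetricSpace X] [MetricSpace Y]

/-- The set of "good radii" : `t` such that some preimage `x'` of `d` inside `s`
satisfies `ball d t ⊆ f '' ball x' (2⁻¹ ^ m)`. -/
def Tset (f : X → Y) (s : Set X) (d : Y) (m : ℕ) : Set ℝ :=
  {t | 0 < t ∧ t ≤ 1 ∧ ∃ x', x' ∈ s ∧ f x' = d ∧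
    ball d t ⊆ f '' ball x' ((2:ℝ)⁻¹ ^ m)}

lemma Tset_bddAbove (f : X → Y) (s : Set X) (d : Y) (m : ℕ) : BddAbove (Tset f s d m) :=
  ⟨1, fun _ ht => ht.2.1⟩

lemma Tset_exists_witness {f : X → Y} {s : Set X} {d : Y} {m : ℕ}
    (h : (Tset f s d m).Nonempty) :
    ∃ x', x' ∈ s ∧ f x' = d ∧
      ball d (sSup (Tset f s d m) / 2) ⊆ f '' ball x' ((2:ℝ)⁻¹ ^ m) := by
  obtain ⟨t0, ht0⟩ := h
  have hpos : 0 < sSup (Tset f s d m) :=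
    lt_of_lt_of_le ht0.1 (le_csSup (Tset_bddAbove f s d m) ht0)
  obtain ⟨t, htT, hlt⟩ := exists_lt_of_lt_csSup ⟨t0, ht0⟩ (half_lt_self hpos)
  obtain ⟨x', hx's, hx'f, hx'ball⟩ := htT.2.2
  exact ⟨x', hx's, hx'f, (ball_subset_ball hlt.le).trans hx'ball⟩

variable [Nonempty X]

open scoped Classical in
/-- Chosen witness point. -/
noncomputable def Wpt (f : X → Y) (s : Set X) (d : Y) (m : ℕ) : X :=
  if h : (Tset f s d m).Nonempty then (Tset_exists_witness h).choose
  else Classical.arbitrary X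

lemma Wpt_spec {f : X → Y} {s : Set X} {d : Y} {m : ℕ} (h : (Tset f s d m).Nonempty) :
    Wpt f s d m ∈ s ∧ f (Wpt f s d m) = d ∧
      ball d (sSup (Tset f s d m) / 2) ⊆ f '' ball (Wpt f s d m) ((2:ℝ)⁻¹ ^ m) := by
  classical
  rw [Wpt]
  rw [dif_pos h]
  exact (Tset_exists_witness h).choose_spec

/-- Key step: near a preimage of `y`, all `d` close enough to `y` have a large good radius. -/
lemma stepA {f : X → Y} (ho : IsOpenMap f) {y : Y} {xs : X} (hxs : f xs = y)
    {s : Set X} {m : ℕ} (hsub : ball xs ((2:ℝ)⁻¹ ^ (m + 1)) ⊆ s) :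
    ∃ r > 0, ∀ d : Y, dist d y < r → min r 1 ≤ sSup (Tset f s d m) := by
  have hball : IsOpen (f '' ball xs ((2:ℝ)⁻¹ ^ (m + 1))) :=
    ho _ isOpen_ball
  have hy : y ∈ f '' ball xs ((2:ℝ)⁻¹ ^ (m + 1)) :=
    ⟨xs, mem_ball_self (by positivity), hxs⟩
  obtain ⟨r0, hr0, hr0sub⟩ := Metric.isOpen_iff.mp hball y hy
  refine ⟨r0 / 2, by positivity, fun d hd => ?_⟩
  have hdmem : d ∈ f '' ball xs ((2:ℝ)⁻¹ ^ (m + 1)) := by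
    apply hr0sub
    rw [mem_ball]
    linarith
  obtain ⟨x', hx'ball, hx'f⟩ := hdmem
  have hsubset : ball xs ((2:ℝ)⁻¹ ^ (m + 1)) ⊆ ball x' ((2:ℝ)⁻¹ ^ m) := by
    intro z hz
    rw [mem_ball] at hz hx'ball ⊢
    have : dist z x' ≤ dist z xs + dist xs x' := dist_triangle _ _ _
    have h2 : dist xs x' = dist x' xs := dist_comm _ _
    have : (2:ℝ)⁻¹ ^ (m+1) + (2:ℝ)⁻¹ ^ (m+1) = (2:ℝ)⁻¹ ^ m := by ring
    linarith
  have hmem : min (r0 / 2) 1 ∈ Tset f s d m := by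
    refine ⟨lt_min (by positivity) one_pos, min_le_right _ _, x', hsub hx'ball, hx'f, ?_⟩
    intro z hz
    apply image_mono (f := f) hsubset
    apply hr0sub
    rw [mem_ball] at hz ⊢
    have := dist_triangle z d y
    have hmin : min (r0 / 2) 1 ≤ r0 / 2 := min_le_left _ _
    linarith
  exact le_csSup (Tset_bddAbove f s d m) hmem


/-- The recursively constructed tree levels. -/
noncomputable def Aset (f : X → Y) (D : Set Y) : ℕ → Set X
  | 0 => (fun d => Wpt f Set.univ d 2) '' D
  | (n+1) => (fun p : X × Y => Wpt f (ball p.1 ((2:ℝ)⁻¹ ^ (n+1))) p.2 (n+3)) ''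
      ((Aset f D n) ×ˢ D)

lemma key_lemma {f : X → Y} [CompleteSpace X] (hf : Continuous f) (ho : IsOpenMap f)
    (hs : Function.Surjective f) {D : Set Y} (hD : Dense D) (y : Y) :
    ∃ x, f x = y ∧ x ∈ closure (⋃ n, Aset f D n) := by
  set P : ℕ → X → Prop := fun n x => x ∈ Aset f D n ∧ dist (f x) y < (2:ℝ)⁻¹ ^ n ∧
    ∃ xs, f xs = y ∧ dist xs x < (2:ℝ)⁻¹ ^ (n+2) with hP
  -- generic continuation step, given a good radius bound from `stepA`
  have pick : ∀ (s : Set X) (m : ℕ) (r : ℝ), 0 < r →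
      (∀ d : Y, dist d y < r → min r 1 ≤ sSup (Tset f s d m)) → ∀ (δ : ℝ), 0 < δ →
      ∃ d ∈ D, f (Wpt f s d m) = d ∧ Wpt f s d m ∈ s ∧ dist d y < δ ∧
        ∃ xs, f xs = y ∧ dist xs (Wpt f s d m) < (2:ℝ)⁻¹ ^ m := by
    intro s m r hr H δ hδ
    have hεpos : 0 < min (min r 1 / 2) δ := by
      have : 0 < min r 1 := lt_min hr one_pos
      positivity
    obtain ⟨d, hdD, hdy⟩ := Metric.mem_closure_iff.mp (hD y) _ hεpos
    rw [dist_comm] at hdy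
    have hdy1 : dist d y < min r 1 / 2 := lt_of_lt_of_le hdy (min_le_left _ _)
    have hdyr : dist d y < r := by
      have h1 : min r 1 ≤ r := min_le_left _ _
      linarith
    have hsup := H d hdyr
    have hTne : (Tset f s d m).Nonempty := by
      by_contra hc
      rw [Set.not_nonempty_iff_eq_empty] at hc
      rw [hc, Real.sSup_empty] at hsup
      have : 0 < min r 1 := lt_min hr one_pos
      linarith
    obtain ⟨hmem, hfW, hball⟩ := Wpt_spec hTne
    refine ⟨d, hdD, hfW, hmem, lt_of_lt_of_le hdy (min_le_right _ _), ?_⟩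
    have hy : y ∈ ball d (sSup (Tset f s d m) / 2) := by
      rw [mem_ball, dist_comm]
      linarith
    obtain ⟨xs, hxsb, hxsf⟩ := hball hy
    exact ⟨xs, hxsf, mem_ball.mp hxsb⟩
  have hbase : ∃ x, P 0 x := by
    obtain ⟨x0, hx0⟩ := hs y
    obtain ⟨r, hr, H⟩ := stepA ho hx0 (s := Set.univ) (m := 2) (Set.subset_univ _)
    obtain ⟨d, hdD, hfW, _, hdy, xs, hxsf, hxsd⟩ :=
      pick Set.univ 2 r hr H ((2:ℝ)⁻¹ ^ 0) (by norm_num)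
    refine ⟨Wpt f Set.univ d 2, ⟨d, hdD, rfl⟩, ?_, xs, hxsf, hxsd⟩
    rw [hfW]
    exact hdy
  have hstep : ∀ n x, P n x → ∃ x', P (n+1) x' ∧ dist x' x < (2:ℝ)⁻¹ ^ (n+1) := by
    intro n x hx
    obtain ⟨hxA, hfx, xs, hxsf, hxsd⟩ := hx
    have hsub : ball xs ((2:ℝ)⁻¹ ^ (n+3+1)) ⊆ ball x ((2:ℝ)⁻¹ ^ (n+1)) := by
      intro z hz
      rw [mem_ball] at hz ⊢
      have ht := dist_triangle z xs x
      have hxpos : (0:ℝ) < (2:ℝ)⁻¹ ^ n := by positivity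
      rw [show n+3+1 = n+4 from by ring] at hz
      have h4 : (2:ℝ)⁻¹ ^ (n+4) = (2:ℝ)⁻¹ ^ n * (1/16) := by rw [pow_add]; norm_num
      have h2 : (2:ℝ)⁻¹ ^ (n+2) = (2:ℝ)⁻¹ ^ n * (1/4) := by rw [pow_add]; norm_num
      have h1 : (2:ℝ)⁻¹ ^ (n+1) = (2:ℝ)⁻¹ ^ n * (1/2) := by rw [pow_add]; norm_num
      rw [h1]; rw [h4] at hz; rw [h2] at hxsd
      nlinarith
    obtain ⟨r, hr, H⟩ := stepA ho hxsf (s := ball x ((2:ℝ)⁻¹ ^ (n+1))) (m := n+3) hsub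
    obtain ⟨d, hdD, hfW, hmem, hdy, xs', hxs'f, hxs'd⟩ :=
      pick (ball x ((2:ℝ)⁻¹ ^ (n+1))) (n+3) r hr H ((2:ℝ)⁻¹ ^ (n+1)) (by positivity)
    refine ⟨Wpt f (ball x ((2:ℝ)⁻¹ ^ (n+1))) d (n+3), ⟨⟨(x, d), ⟨hxA, hdD⟩, rfl⟩, ?_, xs', hxs'f, ?_⟩, mem_ball.mp hmem⟩
    · rw [hfW]; exact hdy
    · have : n + 3 = (n + 1) + 2 := by ring
      rw [this] at hxs'd
      exact hxs'd
  choose! F hF1 hF2 using hstep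
  let u : ℕ → X := fun n => Nat.rec hbase.choose (fun n xn => F n xn) n
  have hu : ∀ n, P n (u n) := by
    intro n
    induction n with
    | zero => exact hbase.choose_spec
    | succ n ih => exact hF1 n (u n) ih
  have hud : ∀ n, dist (u (n+1)) (u n) < (2:ℝ)⁻¹ ^ (n+1) := fun n => hF2 n (u n) (hu n)
  have hcauchy : CauchySeq u := by
    apply cauchySeq_of_le_geometric (2:ℝ)⁻¹ 1 (by norm_num)
    intro n
    rw [dist_comm]
    refine le_trans (hud n).le ?_
    rw [pow_succ, one_mul]
    nlinarith [pow_pos (by norm_num : (0:ℝ) < (2:ℝ)⁻¹) n]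
  obtain ⟨x, hx⟩ := cauchySeq_tendsto_of_complete hcauchy
  refine ⟨x, ?_, mem_closure_of_tendsto hx
    (Filter.Eventually.of_forall (fun n => Set.mem_iUnion.mpr ⟨n, (hu n).1⟩))⟩
  have h1 : Filter.Tendsto (fun n => f (u n)) Filter.atTop (nhds (f x)) :=
    (hf.tendsto x).comp hx
  have h2 : Filter.Tendsto (fun n => f (u n)) Filter.atTop (nhds y) := by
    rw [tendsto_iff_dist_tendsto_zero]
    apply squeeze_zero (fun n => dist_nonneg) (fun n => (hu n).2.1.le)
    exact tendsto_pow_atTop_nhds_zero_of_lt_one (by norm_num) (by norm_num)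
  exact tendsto_nhds_unique h1 h2


lemma mk_Aset_le {f : X → Y} {D : Set Y} (hinf : Cardinal.aleph0 ≤ #D) :
    ∀ n, #(Aset f D n) ≤ #D := by
  intro n
  induction n with
  | zero => exact Cardinal.mk_image_le
  | succ n ih =>
    refine le_trans Cardinal.mk_image_le ?_
    have he : #(↥(Aset f D n ×ˢ D)) = #(↥(Aset f D n) × ↥D) := mk_congr (Equiv.Set.prod _ _)
    rw [he, Cardinal.mk_prod, Cardinal.lift_id, Cardinal.lift_id]
    calc #↥(Aset f D n) * #↥D ≤ #↥D * #↥D := mul_le_mul' ih le_rfl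
      _ = #↥D := Cardinal.mul_eq_self hinf

end aux

theorem stmt0 {X Y : Type u} [MetricSpace X] [MetricSpace Y] [CompleteSpace X]
    (f : X → Y) (hf : Continuous f) (ho : IsOpenMap f) (hs : Function.Surjective f) :
    ∃ Z : Set X, f '' Z = Set.univ ∧ densityCharacter Z = densityCharacter Y := by
  obtain ⟨D, hDd, hDm⟩ := exists_dense_mk_eq Y
  by_cases hfin : D.Finite
  · -- `D` is finite, hence closed and equal to `univ`.
    have hDu : D = Set.univ := by
      have h1 : closure D = D := hfin.isClosed.closure_eq
      have h2 : closure D = Set.univ := hDd.closure_eq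
      rw [← h1, h2]
    choose sec hsec using hs
    have himg : f '' Set.range sec = Set.univ := by
      apply Set.eq_univ_of_forall
      intro y
      exact ⟨sec y, ⟨y, rfl⟩, hsec y⟩
    refine ⟨Set.range sec, himg, le_antisymm ?_ (densityCharacter_target_le hf himg)⟩
    calc densityCharacter ↥(Set.range sec)
        ≤ #(Set.univ : Set ↥(Set.range sec)) := densityCharacter_le_mk_of_dense dense_univ
      _ = #↥(Set.range sec) := Cardinal.mk_univ
      _ ≤ #Y := Cardinal.mk_range_le
      _ = #↥D := by rw [hDu, Cardinal.mk_univ]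
      _ = densityCharacter Y := hDm
  · -- `D` is infinite.
    have hDne : D.Nonempty := Set.Infinite.nonempty hfin
    haveI : Nonempty X := ⟨(hs hDne.choose).choose⟩
    haveI : Infinite ↥D := Set.infinite_coe_iff.mpr hfin
    have hinf : Cardinal.aleph0 ≤ #↥D := Cardinal.aleph0_le_mk _
    have key := key_lemma hf ho hs hDd
    choose sec hsec1 hsec2 using key
    set B : Set X := ⋃ n, Aset f D n with hB
    have hBmk : #↥B ≤ #↥D := by
      have hlift := Cardinal.mk_iUnion_le_lift (Aset f D)
      rw [Cardinal.lift_uzero] at hlift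
      have hℕ : Cardinal.lift.{u} #ℕ = Cardinal.aleph0 := by
        rw [Cardinal.mk_nat, Cardinal.lift_aleph0]
      rw [hℕ] at hlift
      refine hlift.trans ?_
      have hsup : ⨆ n, Cardinal.lift.{0} #↥(Aset f D n) ≤ #↥D := by
        apply ciSup_le'
        intro n
        rw [Cardinal.lift_uzero]
        exact mk_Aset_le hinf n
      calc Cardinal.aleph0 * ⨆ n, Cardinal.lift.{0} #↥(Aset f D n)
          ≤ Cardinal.aleph0 * #↥D := mul_le_mul' le_rfl hsup
        _ = max Cardinal.aleph0 #↥D := Cardinal.mul_eq_max le_rfl hinf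
        _ = #↥D := max_eq_right hinf
    set Z : Set X := B ∪ Set.range sec with hZ
    have himg : f '' Z = Set.univ := by
      apply Set.eq_univ_of_forall
      intro y
      exact ⟨sec y, Or.inr ⟨y, rfl⟩, hsec1 y⟩
    refine ⟨Z, himg, le_antisymm ?_ (densityCharacter_target_le hf himg)⟩
    -- the preimage of B in Z is dense in Z
    have hBZ : B ⊆ Z := Set.subset_union_left
    have hdense : Dense (Subtype.val ⁻¹' B : Set ↥Z) := by
      intro z
      rw [closure_subtype]
      have himgpre : (Subtype.val '' (Subtype.val ⁻¹' B : Set ↥Z)) = Z ∩ B :=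
        Subtype.image_preimage_coe _ _
      rw [himgpre, Set.inter_eq_self_of_subset_right hBZ]
      rcases z.2 with hb | ⟨y, hy⟩
      · exact subset_closure hb
      · rw [← hy]; exact hsec2 y
    calc densityCharacter ↥Z ≤ #↥(Subtype.val ⁻¹' B : Set ↥Z) :=
          densityCharacter_le_mk_of_dense hdense
      _ ≤ #↥B := Cardinal.mk_preimage_of_injective _ _ Subtype.val_injective
      _ ≤ #↥D := hBmk
      _ = densityCharacter Y := hDm
end

section
/- Let X and Y be metric spaces with X complete, Y separable, and let f : X → Y be a continuous open surjection. Then there exists a closed separable subset Z ⊆ X such that f(Z) = Y. -/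
/-!
As `Y` is second countable, the image of a ball of radius `2⁻ⁿ` is covered by the images of
countably many balls of radius `2⁻ⁿ⁻¹` centred inside it. Closing a countable cover of `Y` under
these refinements gives a countable `S ⊆ X`. For `y = f z`, following the refinements from a
first centre yields a Cauchy sequence in `S` whose balls keep meeting `f ⁻¹' {y}`; its limit lies
in `closure S` and, `f ⁻¹' {y}` being closed, is mapped to `y`.
-/

open Filter Topology Metric Set

theorem Set.Countable.exists_countable_superset_forall_subset {α : Type*} {F : α → Set α}
    (hF : ∀ a, (F a).Countable) {t : Set α} (ht : t.Countable) :
    ∃ s, t ⊆ s ∧ s.Countable ∧ ∀ a ∈ s, F a ⊆ s := by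
  let grow : Set α → Set α := fun u => u ∪ ⋃ a ∈ u, F a
  have hgrow : ∀ n, (grow^[n] t).Countable := by
    intro n
    induction n with
    | zero => exact ht
    | succ n ih =>
      rw [Function.iterate_succ_apply']
      exact ih.union (ih.biUnion fun a _ => hF a)
  refine ⟨⋃ n, grow^[n] t, subset_iUnion (fun n => grow^[n] t) 0, countable_iUnion hgrow, ?_⟩
  intro a ha b hb
  obtain ⟨n, hn⟩ := mem_iUnion.1 ha
  refine mem_iUnion.2 ⟨n + 1, ?_⟩
  rw [Function.iterate_succ_apply']
  exact Or.inr (mem_biUnion hn hb)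

theorem exists_seq_of_forall_exists_step {α : Type*} {P : ℕ → α → Prop} {R : ℕ → α → α → Prop}
    (step : ∀ n a, P n a → ∃ b, P (n + 1) b ∧ R n a b) {a₀ : α} (h₀ : P 0 a₀) :
    ∃ u : ℕ → α, ∀ n, P n (u n) ∧ R n (u n) (u (n + 1)) := by
  choose! next hnextP hnextR using step
  let u : ℕ → α := fun n => Nat.rec a₀ (fun n a => next n a) n
  have hu : ∀ n, P n (u n) := by
    intro n
    induction n with
    | zero => exact h₀
    | succ n ih => exact hnextP n (u n) ih
  exact ⟨u, fun n => ⟨hu n, hnextR n (u n) (hu n)⟩⟩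

section

variable {X Y : Type*} [PseudoMetricSpace X] [TopologicalSpace Y] {f : X → Y}

theorem IsOpenMap.exists_countable_subset_image_subset_biUnion_image_ball
    [SecondCountableTopology Y] (hf : IsOpenMap f) (s : Set X) {r : ℝ} (hr : 0 < r) :
    ∃ t ⊆ s, t.Countable ∧ f '' s ⊆ ⋃ x ∈ t, f '' ball x r := by
  obtain ⟨t, hts, htc, ht⟩ := TopologicalSpace.isOpen_biUnion_countable s
    (fun x => f '' ball x r) fun x _ => hf _ isOpen_ball
  refine ⟨t, hts, htc, ?_⟩
  rintro _ ⟨z, hz, rfl⟩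
  rw [ht]
  exact mem_biUnion hz (mem_image_of_mem f (mem_ball_self hr))

theorem eq_of_tendsto_of_forall_mem_image_ball [T1Space Y] (hf : Continuous f) {u : ℕ → X}
    {x : X} (hu : Tendsto u atTop (𝓝 x)) {r : ℕ → ℝ} (hr : Tendsto r atTop (𝓝 0)) {y : Y}
    (hy : ∀ n, y ∈ f '' ball (u n) (r n)) : f x = y := by
  choose z hzu hzy using hy
  have hzx : Tendsto z atTop (𝓝 x) := by
    rw [tendsto_iff_dist_tendsto_zero] at hu ⊢
    refine squeeze_zero (fun n => dist_nonneg) (fun n => ?_) (by simpa using hr.add hu)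
    calc dist (z n) x ≤ dist (z n) (u n) + dist (u n) x := dist_triangle _ _ _
      _ ≤ r n + dist (u n) x := by gcongr; exact (mem_ball.1 (hzu n)).le
  have hx : x ∈ closure (f ⁻¹' {y}) := mem_closure_of_tendsto hzx (Eventually.of_forall hzy)
  rwa [(isClosed_singleton.preimage hf).closure_eq] at hx

theorem IsOpenMap.exists_countable_image_ball_refinement [SecondCountableTopology Y]
    (hf : IsOpenMap f) :
    ∃ S : Set X, S.Countable ∧ (∀ z, ∃ x ∈ S, f z ∈ f '' ball x 1) ∧
      ∀ x ∈ S, ∀ n : ℕ, ∀ y ∈ f '' ball x ((1 / 2) ^ n),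
        ∃ x' ∈ S, dist x' x < (1 / 2) ^ n ∧ y ∈ f '' ball x' ((1 / 2) ^ (n + 1)) := by
  choose t hts htc hcov using fun (x : X) (n : ℕ) =>
    hf.exists_countable_subset_image_subset_biUnion_image_ball (ball x ((1 / 2) ^ n))
      (by positivity : (0 : ℝ) < (1 / 2) ^ (n + 1))
  obtain ⟨t₀, -, ht₀c, ht₀⟩ :=
    hf.exists_countable_subset_image_subset_biUnion_image_ball univ one_pos
  obtain ⟨S, ht₀S, hSc, hS⟩ := ht₀c.exists_countable_superset_forall_subset
    (F := fun x => ⋃ n, t x n) fun x => countable_iUnion (htc x)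
  refine ⟨S, hSc, fun z => ?_, fun x hx n y hy => ?_⟩
  · obtain ⟨x, hx, hz⟩ := mem_iUnion₂.1 (ht₀ (mem_image_of_mem f (mem_univ z)))
    exact ⟨x, ht₀S hx, hz⟩
  · obtain ⟨x', hx', hy'⟩ := mem_iUnion₂.1 (hcov x n hy)
    exact ⟨x', hS x hx (mem_iUnion_of_mem n hx'), hts x n hx', hy'⟩

theorem exists_mem_closure_apply_eq_of_image_ball_refinement [CompleteSpace X] [T1Space Y]
    (hf : Continuous f) {S : Set X}
    (hS : ∀ x ∈ S, ∀ n : ℕ, ∀ y ∈ f '' ball x ((1 / 2) ^ n),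
      ∃ x' ∈ S, dist x' x < (1 / 2) ^ n ∧ y ∈ f '' ball x' ((1 / 2) ^ (n + 1)))
    {x₀ : X} (hx₀ : x₀ ∈ S) {y : Y} (hy : y ∈ f '' ball x₀ 1) :
    y ∈ f '' closure S := by
  obtain ⟨u, hu⟩ := exists_seq_of_forall_exists_step
    (P := fun n x => x ∈ S ∧ y ∈ f '' ball x ((1 / 2) ^ n))
    (R := fun n x x' => dist x' x < (1 / 2) ^ n)
    (fun n x ⟨hxS, hyx⟩ =>
      let ⟨x', hx'S, hdist, hyx'⟩ := hS x hxS n y hyx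
      ⟨x', ⟨hx'S, hyx'⟩, hdist⟩)
    (a₀ := x₀) ⟨hx₀, by simpa using hy⟩
  have hcauchy : CauchySeq u := cauchySeq_of_le_geometric (1 / 2) 1 (by norm_num) fun n => by
    rw [one_mul, dist_comm]
    exact (hu n).2.le
  obtain ⟨x, hx⟩ := cauchySeq_tendsto_of_complete hcauchy
  exact ⟨x, mem_closure_of_tendsto hx (Eventually.of_forall fun n => (hu n).1.1),
    eq_of_tendsto_of_forall_mem_image_ball hf hx
      (tendsto_pow_atTop_nhds_zero_of_lt_one (by norm_num) (by norm_num)) fun n => (hu n).1.2⟩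

end

theorem stmt1 {X Y : Type*} [MetricSpace X] [MetricSpace Y] [CompleteSpace X]
    [TopologicalSpace.SeparableSpace Y]
    (f : X → Y) (hf : Continuous f) (ho : IsOpenMap f) (hs : Function.Surjective f) :
    ∃ Z : Set X, IsClosed Z ∧ TopologicalSpace.IsSeparable Z ∧ f '' Z = Set.univ := by
  have : SecondCountableTopology Y := UniformSpace.secondCountable_of_separable Y
  obtain ⟨S, hSc, hS₀, hS⟩ := ho.exists_countable_image_ball_refinement
  refine ⟨closure S, isClosed_closure, hSc.isSeparable.closure, eq_univ_of_forall fun y => ?_⟩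
  obtain ⟨z, rfl⟩ := hs y
  obtain ⟨x₀, hx₀, hz⟩ := hS₀ z
  exact exists_mem_closure_apply_eq_of_image_ball_refinement hf hS hx₀ hz
end

section
/- Let X and Y be metric spaces with X complete, let Y' ⊆ Y and X' = f⁻¹(Y') for a continuous map f : X → Y. If the restriction f|_{X'} : X' → Y' is open and surjective, then there exists a subset X₀ ⊆ X', relatively closed in X', such that f|_{X₀} : X₀ → Y' is surjective and the density character of X₀ equals the density character of Y'. -/
/-!
If `densityCharacter Y'` is finite, `Y'` is finite and `X₀` can be taken to be the image of a
section of `f` over `Y'`. Otherwise let `κ = densityCharacter Y'` and fix a dense `D ⊆ Y'` of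
cardinality `κ`. A Skolem-hull argument gives `T ⊆ X' = f⁻¹' Y'` of cardinality at most `κ` such
that whenever `x ∈ T` and some `z ∈ B(x, r)` satisfies `B(d, q) ⊆ f(B(z, r / 2))` (with
`d ∈ D`, `q, r ∈ ℚ`), such a `z` exists in `T`. Since `f` is open on `X'`, every `y ∈ Y'` is
then the image of the limit of a Cauchy sequence in `T` with radii halving at each step, and by
completeness this limit lies in `closure T ∩ X'`. That set is `X₀`: it maps onto `Y'`, `T` is
dense in it, and a continuous surjection does not increase the density character.
-/

open Set Function Metric Filter Topology
open scoped Cardinal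

section DensityCharacter

variable {X : Type*} [TopologicalSpace X]

theorem densityCharacter_le_mk {s : Set X} (hs : Dense s) : densityCharacter X ≤ #s :=
  csInf_le' ⟨s, hs, rfl⟩

theorem exists_dense_mk_eq_densityCharacter (X : Type*) [TopologicalSpace X] :
    ∃ s : Set X, Dense s ∧ #s = densityCharacter X :=
  csInf_mem (s := {c | ∃ s : Set X, Dense s ∧ #s = c}) ⟨_, univ, dense_univ, rfl⟩

theorem densityCharacter_le_mk_of_subset_closure {s t : Set X} (hst : s ⊆ t)
    (hts : t ⊆ closure s) : densityCharacter t ≤ #s := by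
  have hdense : Dense ((↑) ⁻¹' s : Set t) := by
    rwa [Subtype.dense_iff, Subtype.image_preimage_coe, inter_eq_right.mpr hst]
  exact (densityCharacter_le_mk hdense).trans
    (Cardinal.mk_preimage_of_injective _ _ Subtype.val_injective)

theorem Dense.eq_univ_of_finite [T1Space X] {s : Set X} (hs : Dense s) (hfin : s.Finite) :
    s = univ := by
  rw [← hs.closure_eq, hfin.isClosed.closure_eq]

theorem densityCharacter_eq_mk_of_finite [T1Space X] [Finite X] :
    densityCharacter X = #X := by
  refine le_antisymm (by simpa using densityCharacter_le_mk (dense_univ (X := X))) ?_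
  refine le_csInf ⟨_, univ, dense_univ, rfl⟩ ?_
  rintro _ ⟨s, hs, rfl⟩
  rw [hs.eq_univ_of_finite s.toFinite, Cardinal.mk_univ]

theorem finite_of_densityCharacter_lt_aleph0 [T1Space X] (h : densityCharacter X < ℵ₀) :
    Finite X := by
  obtain ⟨s, hs, hsX⟩ := exists_dense_mk_eq_densityCharacter X
  have hfin : s.Finite := Cardinal.lt_aleph0_iff_set_finite.mp (hsX ▸ h)
  exact finite_univ_iff.mp (hs.eq_univ_of_finite hfin ▸ hfin)

end DensityCharacter

theorem densityCharacter_image_le {X Y : Type u} [TopologicalSpace X] [TopologicalSpace Y]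
    {f : X → Y} {s : Set X} (hf : ContinuousOn f s) :
    densityCharacter (f '' s) ≤ densityCharacter s := by
  obtain ⟨D, hD, hDs⟩ := exists_dense_mk_eq_densityCharacter s
  have hcont : Continuous (imageFactorization f s) := hf.domRestrict.subtype_mk _
  calc densityCharacter (f '' s)
      ≤ #(imageFactorization f s '' D) :=
        densityCharacter_le_mk (imageFactorization_surjective.denseRange.dense_image hcont hD)
    _ ≤ #D := Cardinal.mk_image_le
    _ = densityCharacter s := hDs

theorem Dense.exists_rat_ball_subset {α : Type*} [PseudoMetricSpace α] {D : Set α}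
    (hD : Dense D) (x : α) {η : ℝ} (hη : 0 < η) :
    ∃ d ∈ D, ∃ q : ℚ, x ∈ ball d q ∧ ball d q ⊆ ball x η := by
  obtain ⟨d, hd, hxd⟩ := hD.exists_dist_lt x (div_pos hη three_pos)
  obtain ⟨q, hq₁, hq₂⟩ := exists_rat_btwn (by linarith : η / 3 < 2 * η / 3)
  refine ⟨d, hd, q, by rw [mem_ball]; linarith, fun v hv => ?_⟩
  rw [mem_ball] at hv ⊢
  linarith [dist_triangle v d x, dist_comm x d]

theorem Cardinal.exists_superset_mapsTo_mk_le {α ι : Type u} {κ : Cardinal.{u}} (hκ : ℵ₀ ≤ κ)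
    (hι : #ι ≤ κ) (g : ι → α → α) {s : Set α} (hs : #s ≤ κ) :
    ∃ t, s ⊆ t ∧ (∀ i, MapsTo (g i) t t) ∧ #t ≤ κ := by
  refine ⟨range fun p : List ι × s => p.1.foldr g p.2, fun a ha => ⟨([], ⟨a, ha⟩), rfl⟩,
    ?_, ?_⟩
  · rintro i _ ⟨⟨l, a⟩, rfl⟩
    exact ⟨(i :: l, a), rfl⟩
  · calc #(range fun p : List ι × s => p.1.foldr g p.2)
        ≤ #(List ι) * #s := Cardinal.mk_range_le.trans_eq <| by
          rw [Cardinal.mk_prod, Cardinal.lift_id, Cardinal.lift_id]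
      _ ≤ κ * κ := mul_le_mul' ((Cardinal.mk_list_le_max ι).trans (max_le hκ hι)) hs
      _ = κ := Cardinal.mul_eq_self hκ

theorem Cardinal.exists_superset_forall_exists_mk_le {α ι : Type u} {κ : Cardinal.{u}}
    (hκ : ℵ₀ ≤ κ) (hι : #ι ≤ κ) (R : ι → α → α → Prop) {s : Set α} (hs : #s ≤ κ) :
    ∃ t, s ⊆ t ∧ (∀ i, ∀ a ∈ t, (∃ b, R i a b) → ∃ b ∈ t, R i a b) ∧ #t ≤ κ := by
  rcases isEmpty_or_nonempty α with _ | _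
  · exact ⟨s, subset_rfl, fun _ a => isEmptyElim a, hs⟩
  choose! g hg using fun i a (h : ∃ b, R i a b) => h
  obtain ⟨t, hst, hgt, htκ⟩ := exists_superset_mapsTo_mk_le hκ hι g hs
  exact ⟨t, hst, fun i a ha h => ⟨g i a, hgt i ha, hg i a h⟩, htκ⟩

theorem exists_mem_closure_apply_eq_of_forall_exists {X Y : Type*} [PseudoMetricSpace X]
    [CompleteSpace X] [TopologicalSpace Y] [T1Space Y] {f : X → Y} (hf : Continuous f)
    {S : Set X} {y : Y}
    (hstep : ∀ x ∈ S, ∀ ε > 0, y ∈ f '' ball x ε →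
      ∃ x' ∈ S, dist x x' < ε ∧ y ∈ f '' ball x' (ε / 2))
    {x : X} (hx : x ∈ S) {ε : ℝ} (hy : y ∈ f '' ball x ε) :
    ∃ ξ ∈ closure S, f ξ = y := by
  have hε : 0 < ε := by
    obtain ⟨z, hz, -⟩ := hy
    exact pos_of_mem_ball hz
  have step : ∀ (n : ℕ) x, x ∈ S ∧ y ∈ f '' ball x (ε / 2 ^ n) →
      ∃ x', (x' ∈ S ∧ y ∈ f '' ball x' (ε / 2 ^ (n + 1))) ∧ dist x x' < ε / 2 ^ n := by
    rintro n x ⟨hxS, hxy⟩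
    obtain ⟨x', hx'S, hdist, hx'y⟩ := hstep x hxS _ (by positivity) hxy
    exact ⟨x', ⟨hx'S, by rwa [pow_succ, ← div_div]⟩, hdist⟩
  choose! next hnext hdist using step
  let u : ℕ → X := fun n => Nat.rec x next n
  have hu : ∀ n, u n ∈ S ∧ y ∈ f '' ball (u n) (ε / 2 ^ n) :=
    fun n => Nat.rec ⟨hx, by rwa [pow_zero, div_one]⟩ (fun n ih => hnext n _ ih) n
  have hcauchy : CauchySeq u := cauchySeq_of_le_geometric_two (C := 2 * ε) fun n =>
    (hdist n _ (hu n)).le.trans_eq (by ring)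
  obtain ⟨ξ, hξ⟩ := cauchySeq_tendsto_of_complete hcauchy
  choose z hz hfz using fun n => (hu n).2
  have hzξ : Tendsto z atTop (𝓝 ξ) :=
    hξ.congr_dist <| squeeze_zero (fun _ => dist_nonneg)
      (fun n => by rw [dist_comm]; exact (mem_ball.mp (hz n)).le)
      ((tendsto_pow_atTop_atTop_of_one_lt one_lt_two).const_div_atTop ε)
  refine ⟨ξ, mem_closure_of_tendsto hξ (Eventually.of_forall fun n => (hu n).1), ?_⟩
  have hfzξ : Tendsto (fun _ : ℕ => y) atTop (𝓝 (f ξ)) := by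
    simpa only [comp_def, hfz] using (hf.tendsto ξ).comp hzξ
  exact (tendsto_const_nhds_iff.mp hfzξ).symm

theorem exists_subset_preimage_mk_le_subset_image_closure {X Y : Type u} [PseudoMetricSpace X]
    [CompleteSpace X] [MetricSpace Y] {f : X → Y} (hf : Continuous f) {Y' : Set Y}
    (hmaps : MapsTo f (f ⁻¹' Y') Y') (ho : IsOpenMap (hmaps.restrict f (f ⁻¹' Y') Y'))
    (hs : Surjective (hmaps.restrict f (f ⁻¹' Y') Y')) (hκ : ℵ₀ ≤ densityCharacter Y') :
    ∃ S ⊆ f ⁻¹' Y', #S ≤ densityCharacter Y' ∧ Y' ⊆ f '' closure S := by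
  set F := hmaps.restrict f (f ⁻¹' Y') Y'
  obtain ⟨D, hD, hDκ⟩ := exists_dense_mk_eq_densityCharacter Y'
  obtain ⟨⟨y₀, -⟩⟩ : Nonempty D :=
    Cardinal.mk_ne_zero_iff.mp (hDκ ▸ (Cardinal.aleph0_pos.trans_le hκ).ne')
  obtain ⟨x₀, -⟩ := hs y₀
  let R : D × ℚ × ℚ → f ⁻¹' Y' → f ⁻¹' Y' → Prop := fun i a b =>
    dist a b < i.2.2 ∧ ball (i.1 : Y') i.2.1 ⊆ F '' ball b (i.2.2 / 2)
  have hι : #(D × ℚ × ℚ) ≤ densityCharacter Y' := by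
    simp only [Cardinal.mk_prod, Cardinal.mkRat, Cardinal.lift_id, Cardinal.lift_aleph0,
      Cardinal.aleph0_mul_aleph0, Cardinal.lift_uzero, hDκ]
    exact (Cardinal.mul_eq_left hκ hκ Cardinal.aleph0_ne_zero).le
  obtain ⟨T, hx₀T, hT, hTκ⟩ := Cardinal.exists_superset_forall_exists_mk_le hκ hι R
    (s := {x₀}) (by simpa using Cardinal.one_le_aleph0.trans hκ)
  refine ⟨(↑) '' T, Subtype.coe_image_subset _ _, Cardinal.mk_image_le.trans hTκ,
    fun y hy => ?_⟩
  have hstep : ∀ x ∈ (↑) '' T, ∀ ε > 0, y ∈ f '' ball x ε →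
      ∃ x' ∈ (↑) '' T, dist x x' < ε ∧ y ∈ f '' ball x' (ε / 2) := by
    rintro _ ⟨a, haT, rfl⟩ ε - ⟨z, hz, rfl⟩
    let z' : f ⁻¹' Y' := ⟨z, hy⟩
    obtain ⟨r, hr, hrε⟩ := exists_rat_btwn (mem_ball'.mp hz)
    have hr₀ : (0 : ℝ) < r := dist_nonneg.trans_lt hr
    obtain ⟨η, hη, hηF⟩ := isOpen_iff.mp (ho _ isOpen_ball) (F z')
      (mem_image_of_mem F (mem_ball_self (half_pos hr₀)))
    obtain ⟨d, hd, q, hzq, hqη⟩ := hD.exists_rat_ball_subset (F z') hη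
    obtain ⟨b, hbT, hab, hqb⟩ := hT (⟨d, hd⟩, q, r) a haT ⟨z', hr, hqη.trans hηF⟩
    obtain ⟨c, hcb, hcz⟩ := hqb hzq
    refine ⟨b, mem_image_of_mem _ hbT, hab.trans hrε, c, ?_, congrArg Subtype.val hcz⟩
    exact (mem_ball.mp hcb).trans (by linarith)
  obtain ⟨z, hz⟩ := hs ⟨y, hy⟩
  refine exists_mem_closure_apply_eq_of_forall_exists hf hstep (mem_image_of_mem _ (hx₀T rfl))
    (ε := dist x₀ z + 1) ⟨z, ?_, congrArg Subtype.val hz⟩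
  rw [mem_ball, dist_comm]
  exact lt_add_one _

theorem exists_isClosed_subset_preimage_image_eq_of_densityCharacter_lt_aleph0 {X Y : Type u}
    [TopologicalSpace X] [T1Space X] [TopologicalSpace Y] [T1Space Y] (f : X → Y) {Y' : Set Y}
    (hfin : densityCharacter Y' < ℵ₀) (hsurj : Y' ⊆ range f) :
    ∃ X₀ ⊆ f ⁻¹' Y', IsClosed X₀ ∧ f '' X₀ = Y' ∧ densityCharacter X₀ = densityCharacter Y' := by
  have := finite_of_densityCharacter_lt_aleph0 hfin
  obtain ⟨X₀, hsub, hbij⟩ := exists_subset_bijOn (f ⁻¹' Y') f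
  rw [image_preimage_eq_of_subset hsurj] at hbij
  have : Finite X₀ := .of_equiv _ hbij.equiv.symm
  refine ⟨X₀, hsub, X₀.toFinite.isClosed, hbij.image_eq, ?_⟩
  rw [densityCharacter_eq_mk_of_finite, densityCharacter_eq_mk_of_finite,
    Cardinal.mk_congr hbij.equiv]

theorem stmt2 {X Y : Type u} [MetricSpace X] [MetricSpace Y] [CompleteSpace X]
    (f : X → Y) (hf : Continuous f) (Y' : Set Y)
    (hmaps : Set.MapsTo f (f ⁻¹' Y') Y')
    (ho : IsOpenMap (hmaps.restrict f (f ⁻¹' Y') Y'))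
    (hs : Function.Surjective (hmaps.restrict f (f ⁻¹' Y') Y')) :
    ∃ X₀ : Set X, X₀ ⊆ f ⁻¹' Y' ∧
      IsClosed {x : f ⁻¹' Y' | (x : X) ∈ X₀} ∧
      f '' X₀ = Y' ∧
      densityCharacter X₀ = densityCharacter Y' := by
  by_cases hfin : densityCharacter Y' < ℵ₀
  · obtain ⟨X₀, hsub, hclosed, himage, hdens⟩ :=
      exists_isClosed_subset_preimage_image_eq_of_densityCharacter_lt_aleph0 f hfin
        fun y hy => ⟨_, congrArg Subtype.val (hs ⟨y, hy⟩).choose_spec⟩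
    exact ⟨X₀, hsub, hclosed.preimage continuous_subtype_val, himage, hdens⟩
  obtain ⟨S, hSY', hSκ, hSimage⟩ :=
    exists_subset_preimage_mk_le_subset_image_closure hf hmaps ho hs (not_lt.mp hfin)
  have himage : f '' (closure S ∩ f ⁻¹' Y') = Y' := by
    rw [image_inter_preimage, inter_eq_right.mpr hSimage]
  refine ⟨closure S ∩ f ⁻¹' Y', inter_subset_right, ?_, himage, le_antisymm ?_ ?_⟩
  · convert isClosed_closure.preimage (continuous_subtype_val (p := (· ∈ f ⁻¹' Y'))) using 1
    ext x
    exact and_iff_left x.2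
  · exact (densityCharacter_le_mk_of_subset_closure (subset_inter subset_closure hSY')
      inter_subset_left).trans hSκ
  · have h := densityCharacter_image_le (s := closure S ∩ f ⁻¹' Y') hf.continuousOn
    rwa [himage] at h
end
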